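/- The execution with two processes i and j, two memory locations x and y, where process i performs wr(x,1); rd(x):1; rd(y):0; rd(y):2 and process j performs wr(y,2); rd(y):2; rd(x):0; rd(x):1, with visibility making wr(x,1) visible to the last read of j and wr(y,2) visible to the last read of i (plus local visibility), admits no pair of serializations ser_i = ser_j (arbitration) that makes all read results valid under the sequential read/write register semantics while also satisfying serial consistency. Equivalently: this history satisfies serial consistency but no valid execution for it satisfies both serial consistency and arbitration. -/

import Mathlib

/-- Memory operations over two locations (`true` = x, `false` = y). -/
inductive MOp where
  | wr : Bool → ℕ → MOp
  | rd : Bool → MOp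
deriving DecidableEq

/-- Events: first component is the process (`true` = i, `false` = j),
second the position in its local history. -/
abbrev Ev13 := Bool × Fin 4

/-- The operations of the history:
i: wr(x,1); rd(x); rd(y); rd(y) and j: wr(y,2); rd(y); rd(x); rd(x). -/
def opOf : Ev13 → MOp
  | (true, k) =>
      if k.val = 0 then .wr true 1 else if k.val = 1 then .rd true else .rd false
  | (false, k) =>
      if k.val = 0 then .wr false 2 else if k.val = 1 then .rd false else .rd true

/-- The results of the history: writes return 0;
i's reads return 1, 0, 2 and j's reads return 2, 0, 1. -/
def resOf : Ev13 → ℕ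
  | (true, k) =>
      if k.val = 0 then 0 else if k.val = 1 then 1 else if k.val = 2 then 0 else 2
  | (false, k) =>
      if k.val = 0 then 0 else if k.val = 1 then 2 else if k.val = 2 then 0 else 1

/-- Program order: same process, earlier position. -/
def po13 (a b : Ev13) : Prop := a.1 = b.1 ∧ a.2 < b.2

/-- Mandatory visibility: program order (local visibility), plus wr(x,1)
visible to the last read of j and wr(y,2) visible to the last read of i. -/
def vis13 (a b : Ev13) : Prop :=
  po13 a b ∨ (a = (true, (0 : Fin 4)) ∧ b = (false, (3 : Fin 4)))
    ∨ (a = (false, (0 : Fin 4)) ∧ b = (true, (3 : Fin 4)))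

/-- Each serialization is a strict total order. -/
def STO13 (ser : Bool → Ev13 → Ev13 → Prop) : Prop :=
  (∀ p a, ¬ ser p a a) ∧ (∀ p a b c, ser p a b → ser p b c → ser p a c) ∧
  (∀ p a b, a ≠ b → ser p a b ∨ ser p b a)

/-- Sequential read/write register semantics: every read returns the value of
the last visible write to its location serialized before it, or 0 if there is
no visible write to that location. -/
def Valid13 (vis : Ev13 → Ev13 → Prop) (ser : Bool → Ev13 → Ev13 → Prop) : Prop :=
  ∀ (o : Ev13) (l : Bool), opOf o = .rd l →
    ((¬ ∃ w v, opOf w = MOp.wr l v ∧ vis w o) ∧ resOf o = 0) ∨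
    (∃ w, opOf w = MOp.wr l (resOf o) ∧ vis w o ∧
      ∀ w' v', opOf w' = MOp.wr l v' → vis w' o → w' ≠ w → ser o.1 w' w)

/-- Serial consistency: events serialized before an event are exactly those
visible to it. -/
def SerCons13 (vis : Ev13 → Ev13 → Prop) (ser : Bool → Ev13 → Ev13 → Prop) : Prop :=
  ∀ o x : Ev13, ser o.1 x o ↔ vis x o

/-!
Without arbitration, each process may serialize its own first three events, then the other
process's write, then its own last read, then the rest; every read then sees exactly the
writes visible to it. With a single serialization `s`, serial consistency makes visibility
coincide with `s`. Since `rd(y):0` of `i` sees no write to `y`, it precedes `wr(y,2)` in `s`,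
and symmetrically `rd(x):0` of `j` precedes `wr(x,1)`; with program order this closes the cycle
`wr(x,1) < rd(y) < wr(y,2) < rd(x) < wr(x,1)`.
-/

instance : ∀ a b : Ev13, Decidable (vis13 a b) := fun a b => by
  unfold vis13 po13; infer_instance

lemma eq_of_opOf_eq_wr {w : Ev13} {l : Bool} {v : ℕ} (hw : opOf w = .wr l v) : w = (l, 0) := by
  rcases w with ⟨p, k⟩
  fin_cases k <;> cases p <;> cases l <;> simp_all [opOf]

lemma opOf_ne_wr_zero (w : Ev13) (l : Bool) : opOf w ≠ .wr l 0 := by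
  revert w l; decide

lemma valid13_of_unique_writer (vis : Ev13 → Ev13 → Prop) (ser : Bool → Ev13 → Ev13 → Prop)
    (h : ∀ (o : Ev13) (l : Bool), opOf o = .rd l →
      (¬ vis (l, 0) o ∧ resOf o = 0) ∨ (opOf (l, 0) = .wr l (resOf o) ∧ vis (l, 0) o)) :
    Valid13 vis ser := by
  intro o l ho
  rcases h o l ho with ⟨hnv, hres⟩ | ⟨hw, hv⟩
  · refine .inl ⟨?_, hres⟩
    rintro ⟨w, v, hw, hv⟩
    exact hnv (eq_of_opOf_eq_wr hw ▸ hv)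
  · exact .inr ⟨(l, 0), hw, hv, fun w' _ hw' _ hne => absurd (eq_of_opOf_eq_wr hw') hne⟩

lemma not_vis_of_resOf_eq_zero {vis : Ev13 → Ev13 → Prop} {ser : Bool → Ev13 → Ev13 → Prop}
    (hvalid : Valid13 vis ser) {o w : Ev13} {l : Bool} {v : ℕ} (ho : opOf o = .rd l)
    (hres : resOf o = 0) (hw : opOf w = .wr l v) : ¬ vis w o := by
  rcases hvalid o l ho with ⟨hnone, -⟩ | ⟨w', hw', -⟩
  · exact fun hv => hnone ⟨w, v, hw, hv⟩
  · exact absurd (hres ▸ hw') (opOf_ne_wr_zero w' l)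

lemma sto13_of_injective_rank (rk : Bool → Ev13 → ℕ) (hrk : ∀ p, Function.Injective (rk p)) :
    STO13 fun p a b => rk p a < rk p b :=
  ⟨fun _ _ => lt_irrefl _, fun _ _ _ _ => lt_trans,
    fun p _ _ hab => lt_or_gt_of_ne ((hrk p).ne hab)⟩

lemma ser_iff_vis_of_arbitration {vis : Ev13 → Ev13 → Prop} {ser : Bool → Ev13 → Ev13 → Prop}
    (hsc : SerCons13 vis ser) (harb : ser true = ser false) (p : Bool) (x o : Ev13) :
    ser p x o ↔ vis x o := by
  have hp : ser p = ser o.1 := by cases p <;> cases o.1 <;> simp only [harb]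
  rw [hp]
  exact hsc o x

/-- Position of an event in process `p`'s serialization `p0 p1 p2 q0 p3 q1 q2 q3`. -/
def localRank (p : Bool) (e : Ev13) : ℕ :=
  if e.1 = p then (if e.2.val ≤ 2 then e.2.val else 4)
  else (if e.2.val = 0 then 3 else e.2.val + 4)

def localSer (p : Bool) (a b : Ev13) : Prop := localRank p a < localRank p b

instance : ∀ p (a b : Ev13), Decidable (localSer p a b) := fun p a b => by
  unfold localSer; infer_instance

lemma localRank_injective (p : Bool) : Function.Injective (localRank p) := by
  revert p; decide

lemma serCons13_localSer : SerCons13 vis13 localSer := by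
  unfold SerCons13; decide

lemma valid13_localSer : Valid13 vis13 localSer :=
  valid13_of_unique_writer _ _ (by decide)

lemma exists_serCons13 :
    ∃ (vis : Ev13 → Ev13 → Prop) (ser : Bool → Ev13 → Ev13 → Prop),
      (∀ a b, vis13 a b → vis a b) ∧ STO13 ser ∧
      (∀ a b, vis a b → ser b.1 a b) ∧ Valid13 vis ser ∧ SerCons13 vis ser :=
  ⟨vis13, localSer, fun _ _ h => h, sto13_of_injective_rank localRank localRank_injective,
    fun a b h => (serCons13_localSer b a).mpr h, valid13_localSer, serCons13_localSer⟩

lemma not_exists_serCons13_of_arbitration :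
    ¬ ∃ (vis : Ev13 → Ev13 → Prop) (ser : Bool → Ev13 → Ev13 → Prop),
      (∀ a b, vis13 a b → vis a b) ∧ STO13 ser ∧
      (∀ a b, vis a b → ser b.1 a b) ∧ Valid13 vis ser ∧ SerCons13 vis ser ∧
      ser true = ser false := by
  rintro ⟨vis, ser, hvis13, ⟨hirr, htrans, htot⟩, -, hvalid, hsc, harb⟩
  have hser := ser_iff_vis_of_arbitration hsc harb true
  have po_i : ser true (true, 0) (true, 2) := (hser _ _).mpr (hvis13 _ _ (.inl ⟨rfl, by decide⟩))
  have po_j : ser true (false, 0) (false, 2) :=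
    (hser _ _).mpr (hvis13 _ _ (.inl ⟨rfl, by decide⟩))
  have rd_y_before_wr_y : ser true (true, 2) (false, 0) := by
    refine (htot true _ _ (by decide)).resolve_right fun h => ?_
    exact not_vis_of_resOf_eq_zero (v := 2) hvalid rfl rfl rfl ((hser _ _).mp h)
  have rd_x_before_wr_x : ser true (false, 2) (true, 0) := by
    refine (htot true _ _ (by decide)).resolve_right fun h => ?_
    exact not_vis_of_resOf_eq_zero (v := 1) hvalid rfl rfl rfl ((hser _ _).mp h)
  exact hirr true _ <| htrans true _ _ _ po_i <| htrans true _ _ _ rd_y_before_wr_y <|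
    htrans true _ _ _ po_j rd_x_before_wr_x

/-- The history above satisfies serial consistency (there is a
valid serially consistent execution), but no valid execution for it satisfies
both serial consistency and arbitration (ser_i = ser_j). -/
theorem stmt_13 :
    (∃ (vis : Ev13 → Ev13 → Prop) (ser : Bool → Ev13 → Ev13 → Prop),
      (∀ a b, vis13 a b → vis a b) ∧ STO13 ser ∧
      (∀ a b, vis a b → ser b.1 a b) ∧ Valid13 vis ser ∧ SerCons13 vis ser) ∧
    ¬ (∃ (vis : Ev13 → Ev13 → Prop) (ser : Bool → Ev13 → Ev13 → Prop),
      (∀ a b, vis13 a b → vis a b) ∧ STO13 ser ∧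
      (∀ a b, vis a b → ser b.1 a b) ∧ Valid13 vis ser ∧ SerCons13 vis ser ∧
      ser true = ser false) :=
  ⟨exists_serCons13, not_exists_serCons13_of_arbitration⟩
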